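/- Let G and H be vertex-disjoint connected multigraphs with distinct vertices u_1,…,u_k in G and v_1,…,v_k in H. For a partition P = {P_1,…,P_r} of [k], let G(P) be obtained from G by identifying, for each j, all vertices {u_i : i ∈ P_j} to a single vertex, and define H(P) analogously. If T_{G(P)} = T_{H(P)} for every partition P of [k], then for every multigraph W with distinct vertices w_1,…,w_k, the gluing of G to W along (u_i ↦ w_i) and the gluing of H to W along (v_i ↦ w_i) have equal Tutte polynomials. -/

import Mathlib

open scoped BigOperators
open MvPolynomial

attribute [local instance] Classical.propDecidable

/-- A multigraph: finite vertex and edge types, each edge has an unordered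
pair of endpoints (loops and parallel edges allowed). -/
structure Multigraph where
  V : Type
  E : Type
  [fintypeV : Fintype V]
  [fintypeE : Fintype E]
  [decEqV : DecidableEq V]
  [decEqE : DecidableEq E]
  ends : E → Sym2 V

attribute [instance] Multigraph.fintypeV Multigraph.fintypeE
  Multigraph.decEqV Multigraph.decEqE

noncomputable instance quotSetoidFintype {α : Type} [Fintype α] (s : Setoid α) :
    Fintype (Quotient s) := by classical exact Quotient.fintype s

noncomputable instance connCompFintype {α : Type} [Fintype α] (G : SimpleGraph α) :
    Fintype G.ConnectedComponent := by
  classical exact Fintype.ofSurjective G.connectedComponentMk fun c => c.exists_rep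

namespace Multigraph

variable (G : Multigraph)

/-- The simple graph induced by a set of edges `A` (parallel edges and loops
do not affect connectivity). -/
def spanning (A : Finset G.E) : SimpleGraph G.V :=
  SimpleGraph.fromRel (fun a b => ∃ e ∈ A, G.ends e = s(a, b))

/-- number of connected components of the spanning subgraph `(V, A)` -/
noncomputable def comps (A : Finset G.E) : ℕ :=
  Nat.card (G.spanning A).ConnectedComponent

/-- rank of an edge subset: `|V| - c(A)` -/
noncomputable def rk (A : Finset G.E) : ℕ :=
  Fintype.card G.V - G.comps A

/-- The Tutte polynomial, as a polynomial in the variables `X 0 = x`, `X 1 = y`. -/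
noncomputable def tutte : MvPolynomial (Fin 2) ℤ :=
  ∑ A : Finset G.E,
    (X 0 - 1) ^ (G.rk Finset.univ - G.rk A) * (X 1 - 1) ^ (A.card - G.rk A)

def Connected : Prop := (G.spanning Finset.univ).Connected

def IsLoop (e : G.E) : Prop := (G.ends e).IsDiag

def IsBridge (e : G.E) : Prop :=
  G.comps (Finset.univ.erase e) ≠ G.comps Finset.univ

noncomputable def numLoops : ℕ := Nat.card {e : G.E // (G.ends e).IsDiag}

/-- delete a set of edges -/
def deleteSet (F : Finset G.E) : Multigraph where
  V := G.V
  E := {e : G.E // e ∉ F}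
  ends := fun e => G.ends e.1

/-- delete one edge -/
def delete (e : G.E) : Multigraph := G.deleteSet {e}

/-- identify vertices along (the equivalence generated by) a relation `r` -/
noncomputable def identify (r : G.V → G.V → Prop) : Multigraph where
  V := Quotient (Relation.EqvGen.setoid r)
  E := G.E
  decEqV := Classical.decEq _
  ends := fun e => (G.ends e).map (Quotient.mk (Relation.EqvGen.setoid r))

/-- contract an edge: delete it and identify its two endpoints -/
noncomputable def contract (e : G.E) : Multigraph :=
  (G.delete e).identify (fun a b => a ∈ G.ends e ∧ b ∈ G.ends e)

/-- the projection of a vertex of `G` to a vertex of `G/e` -/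
noncomputable def cmk (e : G.E) : G.V → (G.contract e).V := fun v => Quotient.mk _ v

/-- restrict to the edges satisfying `P` (all vertices are kept) -/
noncomputable def edgeRestrict (P : G.E → Prop) : Multigraph where
  V := G.V
  E := {e : G.E // P e}
  ends := fun e => G.ends e.1

/-- add new edges indexed by `n` with prescribed endpoints -/
def addEdges (n : Type) [Fintype n] [DecidableEq n] (f : n → Sym2 G.V) :
    Multigraph where
  V := G.V
  E := G.E ⊕ n
  ends := Sum.elim G.ends f

/-- disjoint union -/
def disjUnion (H : Multigraph) : Multigraph where
  V := G.V ⊕ H.V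
  E := G.E ⊕ H.E
  ends := Sum.elim (fun e => (G.ends e).map Sum.inl) (fun e => (H.ends e).map Sum.inr)

/-- the gluing `G(u_1,…,u_k) ⊔ H(w_1,…,w_k)`: disjoint union with `u i`
identified with `w i` for each `i` -/
noncomputable def glue (H : Multigraph) {k : ℕ} (u : Fin k → G.V) (w : Fin k → H.V) :
    Multigraph :=
  (G.disjUnion H).identify
    (fun a b => ∃ i : Fin k, a = Sum.inl (u i) ∧ b = Sum.inr (w i))

/-- projection from `G.V ⊕ H.V` to the vertices of the gluing -/
noncomputable def glueMk (H : Multigraph) {k : ℕ} (u : Fin k → G.V) (w : Fin k → H.V) :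
    G.V ⊕ H.V → (G.glue H u w).V := fun a => Quotient.mk _ a

end Multigraph

/-- `σ` is an isomorphism of multigraphs: a vertex bijection preserving
edge multiplicities between every pair of vertices. -/
def Multigraph.IsIsoMap (G H : Multigraph) (σ : G.V ≃ H.V) : Prop :=
  ∀ p : Sym2 G.V,
    Nat.card {e : G.E // G.ends e = p} = Nat.card {e : H.E // H.ends e = p.map σ}

/-- `G` and `H` are isomorphic multigraphs -/
def Multigraph.Iso (G H : Multigraph) : Prop := ∃ σ : G.V ≃ H.V, G.IsIsoMap H σ

/-- `σ` is an automorphism of `G` -/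
def Multigraph.IsAuto (G : Multigraph) (σ : G.V ≃ G.V) : Prop := G.IsIsoMap G σ

/-- `Q` is a partition of the type `α` -/
def IsPartitionUniv {α : Type} (Q : Finset (Finset α)) : Prop :=
  (∀ B ∈ Q, B.Nonempty) ∧ ∀ i : α, ∃! B, B ∈ Q ∧ i ∈ B

/-!
Let `Z_P = ∑_A (x - 1) ^ c(A) (y - 1) ^ (|A| + c(A)) = (x - 1) ^ c(E) (y - 1) ^ |V| T_P` be
the Fortuin–Kasteleyn form of the Tutte polynomial. An edge set of the gluing of `G` and `W` is
`B ⊔ C` with `B ⊆ E(G)` and `C ⊆ E(W)`; its components are those of `G(P_C)` on `B`, where `P_C`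
is the partition of `[k]` by the components of `W` on `C` containing the `w i`, together with the
components of `W` on `C` containing no `w i`. Hence `Z` of the gluing is a combination of the
`Z_{G(P)}` with coefficients depending only on `W`, and `c(E)` and `|V|` of the gluing are read off
from `G(P)` in the same way. Since each `G(P)` is connected, `T_{G(P)}` determines `|V(G(P))|`
(the rank `|V| - 1` is the degree of `T` in `x`), hence `Z_{G(P)}`.
-/

namespace Setoid

variable {α β γ δ : Type*}

lemma card_quotient_ker_sumMap [Finite α] [Finite β] (f : α → γ) (g : β → δ) :
    Nat.card (Quotient (ker (Sum.map f g))) = Nat.card (Quotient (ker f)) +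
      Nat.card (Quotient (ker g)) := by
  have hF : ∀ x y, ker (Sum.map f g) x y →
      Sum.map (Quotient.mk (ker f)) (Quotient.mk (ker g)) x =
        Sum.map (Quotient.mk _) (Quotient.mk _) y := by
    rintro (a | a) (b | b) h <;> simp only [ker_def, Sum.map_inl, Sum.map_inr, reduceCtorEq,
      Sum.inl.injEq, Sum.inr.injEq] at h ⊢
    exacts [Quotient.sound h, Quotient.sound h]
  rw [← Nat.card_sum]
  exact Nat.card_congr
    { toFun := Quotient.lift _ hF
      invFun := Sum.elim (Quotient.map' Sum.inl fun _ _ h => congrArg Sum.inl h)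
        (Quotient.map' Sum.inr fun _ _ h => congrArg Sum.inr h)
      left_inv := by rintro ⟨a | a⟩ <;> rfl
      right_inv := by rintro (a | a) <;> induction a using Quotient.ind <;> rfl }

lemma ker_sumMap_sup_ker_sumElim (f : α → β) (g : α → γ) :
    ker (Sum.map f g) ⊔ ker (Sum.elim id id) = (ker f ⊔ ker g).comap (Sum.elim id id) := by
  set K := ker (Sum.map f g) ⊔ ker (Sum.elim id id)
  have hK : ∀ x, K x (.inl (Sum.elim id id x)) := fun x =>
    le_sup_right (a := ker (Sum.map f g)) (by cases x <;> rfl)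
  have hl : ∀ {a b}, ker f a b → K (.inl a) (.inl b) := fun h =>
    le_sup_left (b := ker (Sum.elim id id)) (congrArg Sum.inl h)
  have hr : ∀ {a b}, ker g a b → K (.inr a) (.inr b) := fun h =>
    le_sup_left (b := ker (Sum.elim id id)) (congrArg Sum.inr h)
  refine le_antisymm (sup_le ?_ ?_) fun x y hxy => ?_
  · rintro (a | a) (b | b) h <;> simp only [ker_def, Sum.map_inl, Sum.map_inr, reduceCtorEq,
      Sum.inl.injEq, Sum.inr.injEq] at h
    exacts [le_sup_left (b := ker g) h, le_sup_right (a := ker f) h]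
  · intro x y h
    rw [comap_rel, show Sum.elim id id x = Sum.elim id id y from h]
  · have : ker f ⊔ ker g ≤ K.comap Sum.inl := by
      refine sup_le (fun a b h => hl h) fun a b h => ?_
      exact K.trans' (K.symm' (hK (.inr a))) (K.trans' (hr h) (hK (.inr b)))
    exact K.trans' (hK x) (K.trans' (this hxy) (K.symm' (hK y)))

lemma card_quotient_comap_of_surjective (s : Setoid β) {p : α → β}
    (hp : Function.Surjective p) : Nat.card (Quotient (s.comap p)) = Nat.card (Quotient s) := by
  rw [Nat.card_congr (comapQuotientEquiv p s), (Quotient.mk''_surjective.comp hp).range_eq,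
    Nat.card_univ]

end Setoid

namespace SimpleGraph

variable {V V' W ι κ : Type*}

lemma Reachable.rel_of_adj {S : SimpleGraph V} {r : V → V → Prop} (hr : Equivalence r)
    (hadj : ∀ a b, S.Adj a b → r a b) {x y : V} (h : S.Reachable x y) : r x y := by
  obtain ⟨p⟩ := h
  induction p with
  | nil => exact hr.refl _
  | cons ha _ ih => exact hr.trans (hadj _ _ ha) ih

lemma Reachable.map_of_adj {S : SimpleGraph V} {S' : SimpleGraph V'} {f : V → V'}
    (hf : ∀ a b, S.Adj a b → S'.Reachable (f a) (f b)) {x y : V} (h : S.Reachable x y) :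
    S'.Reachable (f x) (f y) :=
  h.rel_of_adj ⟨fun _ => .rfl, .symm, .trans⟩ hf

lemma Connected.of_reachable_map {S : SimpleGraph V} {S' : SimpleGraph V'} {f : V → V'}
    (hsurj : Function.Surjective f) (hf : ∀ a b, S.Adj a b → S'.Reachable (f a) (f b))
    (hS : S.Connected) : S'.Connected := by
  have : Nonempty V' := hS.nonempty.map f
  refine ⟨fun x' y' => ?_⟩
  obtain ⟨x, rfl⟩ := hsurj x'
  obtain ⟨y, rfl⟩ := hsurj y'
  exact (hS.preconnected x y).map_of_adj hf

lemma card_connectedComponent_le_card_sup_edge_add_one [Finite V] (S : SimpleGraph V) (a b : V) :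
    Nat.card S.ConnectedComponent ≤ Nat.card (S ⊔ edge a b).ConnectedComponent + 1 := by
  classical
  set φ := ConnectedComponent.map (Hom.ofLE (le_sup_left : S ≤ S ⊔ edge a b))
  -- a path in `S ⊔ edge a b` either avoids the new edge or joins both ends to `{a, b}` in `S`
  let R : V → V → Prop := fun x y => S.Reachable x y ∨
    ((S.Reachable x a ∨ S.Reachable x b) ∧ (S.Reachable y a ∨ S.Reachable y b))
  have hR : Equivalence R := by
    refine ⟨fun _ => .inl .rfl, ?_, ?_⟩
    · rintro x y (h | ⟨hx, hy⟩)
      exacts [.inl h.symm, .inr ⟨hy, hx⟩]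
    · rintro x y z (h | ⟨hx, hy⟩) (h' | ⟨hy', hz⟩)
      · exact .inl (h.trans h')
      · exact .inr ⟨hy'.imp h.trans h.trans, hz⟩
      · exact .inr ⟨hx, hy.imp h'.symm.trans h'.symm.trans⟩
      · exact .inr ⟨hx, hz⟩
  have hreach : ∀ x y, (S ⊔ edge a b).Reachable x y → R x y := by
    refine fun x y hxy => hxy.rel_of_adj hR ?_
    rintro x y (h | h)
    · exact .inl h.reachable
    rw [edge_adj] at h
    rcases h with ⟨⟨rfl, rfl⟩ | ⟨rfl, rfl⟩, -⟩
    exacts [.inr ⟨.inl .rfl, .inr .rfl⟩, .inr ⟨.inr .rfl, .inl .rfl⟩]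
  -- only the components of `a` and `b` can merge, so dropping that of `a` leaves an injection
  have hinj : Function.Injective fun c : S.ConnectedComponent =>
      if c = S.connectedComponentMk a then none else some (φ c) := by
    intro c₁ c₂ hc
    induction c₁ using ConnectedComponent.ind with | h x => ?_
    induction c₂ using ConnectedComponent.ind with | h y => ?_
    by_cases hx : S.connectedComponentMk x = S.connectedComponentMk a <;>
      by_cases hy : S.connectedComponentMk y = S.connectedComponentMk a <;>
      simp only [hx, hy, if_true, if_false, reduceCtorEq, Option.some.injEq] at hc
    · exact hx.trans hy.symm
    · rw [ConnectedComponent.eq] at hx hy ⊢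
      rcases hreach x y (ConnectedComponent.exact hc) with h | ⟨hxab | hxab, hyab | hyab⟩
      exacts [h, absurd hxab hx, absurd hxab hx, absurd hyab hy, hxab.trans hyab.symm]
  simpa using Nat.card_le_card_of_injective _ hinj

def markerSetoid (S : SimpleGraph V) (m : ι → V) : Setoid ι :=
  Setoid.ker (S.connectedComponentMk ∘ m)

lemma markerSetoid_iff {S : SimpleGraph V} {m : ι → V} {i j : ι} :
    S.markerSetoid m i j ↔ S.Reachable (m i) (m j) :=
  Setoid.ker_def.trans ConnectedComponent.eq

noncomputable def numUnmarked (S : SimpleGraph V) (m : ι → V) : ℕ :=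
  Nat.card {c : S.ConnectedComponent // c ∉ Set.range (S.connectedComponentMk ∘ m)}

lemma card_connectedComponent_eq [Finite V] (S : SimpleGraph V) (m : ι → V) :
    Nat.card S.ConnectedComponent = S.numUnmarked m + Nat.card (Quotient (S.markerSetoid m)) := by
  classical
  rw [numUnmarked, markerSetoid, Nat.card_congr (Setoid.quotientKerEquivRange _), add_comm,
    ← Nat.card_sum]
  exact Nat.card_congr (Equiv.sumCompl _).symm

/-- `q` exhibits `S'` as the graph obtained from `S` by identifying the markers `m i` and `m j`
whenever `ρ i j`. -/
structure IsIdentification (S : SimpleGraph V) (S' : SimpleGraph V') (q : V → V') (m : ι → V)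
    (ρ : Setoid ι) : Prop where
  surjective : Function.Surjective q
  reachable_map : ∀ a b, S.Adj a b → S'.Reachable (q a) (q b)
  exists_adj_of_adj : ∀ x y, S'.Adj x y → ∃ a b, q a = x ∧ q b = y ∧ S.Adj a b
  map_eq : ∀ i j, ρ i j → q (m i) = q (m j)
  eqvGen_of_map_eq : ∀ a b, q a = q b →
    Relation.EqvGen (fun a b => ∃ i j, ρ i j ∧ a = m i ∧ b = m j) a b

namespace IsIdentification

variable {S : SimpleGraph V} {S' : SimpleGraph V'} {q : V → V'} {m : ι → V} {ρ : Setoid ι}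
  (h : IsIdentification S S' q m ρ)
include h

lemma sup_le_markerSetoid : S.markerSetoid m ⊔ ρ ≤ S'.markerSetoid (q ∘ m) := by
  refine sup_le (fun i j hij => ?_) (fun i j hij => ?_) <;> rw [markerSetoid_iff]
  · exact (markerSetoid_iff.1 hij).map_of_adj h.reachable_map
  · exact (h.map_eq i j hij ▸ .rfl : S'.Reachable (q (m i)) (q (m j)))

lemma reachable_of_reachable_map {x y : V} (hxy : S'.Reachable (q x) (q y)) :
    S.Reachable x y ∨ ∃ i j, S.Reachable x (m i) ∧ (S.markerSetoid m ⊔ ρ) i j ∧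
      S.Reachable (m j) y := by
  set J := S.markerSetoid m ⊔ ρ
  set R : V → V → Prop := fun x y =>
    S.Reachable x y ∨ ∃ i j, S.Reachable x (m i) ∧ J i j ∧ S.Reachable (m j) y
  have hmJ : ∀ {i j}, S.Reachable (m i) (m j) → J i j := fun hij =>
    le_sup_left (a := S.markerSetoid m) (markerSetoid_iff.2 hij)
  have hR : Equivalence R := by
    refine ⟨fun x => .inl .rfl, ?_, ?_⟩
    · rintro x y (h | ⟨i, j, h₁, hij, h₂⟩)
      exacts [.inl h.symm, .inr ⟨j, i, h₂.symm, Setoid.symm' J hij, h₁.symm⟩]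
    · rintro x y z (h | ⟨i, j, h₁, hij, h₂⟩) (h' | ⟨i', j', h₁', hij', h₂'⟩)
      · exact .inl (h.trans h')
      · exact .inr ⟨i', j', h.trans h₁', hij', h₂'⟩
      · exact .inr ⟨i, j, h₁, hij, h₂.trans h'⟩
      · exact .inr ⟨i, j', h₁,
          Setoid.trans' J (Setoid.trans' J hij (hmJ (h₂.trans h₁'))) hij', h₂'⟩
  have hfib : ∀ a b, q a = q b → R a b := by
    intro a b hab
    refine Setoid.eqvGen_le (s := ⟨R, hR⟩) ?_ (h.eqvGen_of_map_eq a b hab)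
    rintro _ _ ⟨i, j, hij, rfl, rfl⟩
    exact .inr ⟨i, j, .rfl, le_sup_right (a := S.markerSetoid m) hij, .rfl⟩
  -- transport `R` to `V'`; it is an equivalence relation containing the adjacency of `S'`
  let R' : V' → V' → Prop := fun x' y' => ∀ x y, q x = x' → q y = y' → R x y
  have hR' : Equivalence R' := by
    refine ⟨fun x' x y hx hy => hfib x y (hx.trans hy.symm), fun h' x y hx hy =>
      hR.symm (h' y x hy hx), fun {_ y' _} h₁ h₂ x z hx hz => ?_⟩
    obtain ⟨y, rfl⟩ := h.surjective y'
    exact hR.trans (h₁ x y hx rfl) (h₂ y z rfl hz)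
  have hadj : ∀ x' y', S'.Adj x' y' → R' x' y' := by
    rintro _ _ hxy x y rfl rfl
    obtain ⟨a, b, ha, hb, hab⟩ := h.exists_adj_of_adj _ _ hxy
    exact hR.trans (hR.trans (hfib x a ha.symm) (.inl hab.reachable)) (hfib b y hb)
  exact hxy.rel_of_adj hR' hadj x y rfl rfl

lemma markerSetoid_eq : S'.markerSetoid (q ∘ m) = S.markerSetoid m ⊔ ρ := by
  refine le_antisymm (fun i j hij => ?_) h.sup_le_markerSetoid
  have hmJ : ∀ {i j}, S.Reachable (m i) (m j) → (S.markerSetoid m ⊔ ρ) i j := fun hij =>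
    le_sup_left (a := S.markerSetoid m) (markerSetoid_iff.2 hij)
  rcases h.reachable_of_reachable_map (markerSetoid_iff.1 hij) with hr | ⟨i', j', h₁, hij', h₂⟩
  · exact hmJ hr
  · exact Setoid.trans' _ (Setoid.trans' _ (hmJ h₁) hij') (hmJ h₂)

lemma numUnmarked_eq : S'.numUnmarked (q ∘ m) = S.numUnmarked m := by
  let φ : S.ConnectedComponent → S'.ConnectedComponent :=
    Quot.lift (S'.connectedComponentMk ∘ q) fun _ _ hr =>
      ConnectedComponent.sound (hr.map_of_adj h.reachable_map)
  have hmarked : ∀ x,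
      S'.connectedComponentMk (q x) ∈ Set.range (S'.connectedComponentMk ∘ q ∘ m) →
        S.connectedComponentMk x ∈ Set.range (S.connectedComponentMk ∘ m) := by
    rintro x ⟨i, hi⟩
    rcases h.reachable_of_reachable_map (ConnectedComponent.exact hi) with hr | ⟨-, j, -, -, hr⟩
    exacts [⟨i, ConnectedComponent.sound hr⟩, ⟨j, ConnectedComponent.sound hr⟩]
  symm
  refine Nat.card_congr (Equiv.ofBijective (fun c => ⟨φ c, ?_⟩) ⟨?_, ?_⟩)
  · obtain ⟨c, hc⟩ := c
    induction c using ConnectedComponent.ind with | h x => exact fun hx => hc (hmarked x hx)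
  · rintro ⟨c₁, hc₁⟩ ⟨c₂, hc₂⟩ hc
    induction c₁ using ConnectedComponent.ind with | h x => ?_
    induction c₂ using ConnectedComponent.ind with | h y => ?_
    rcases h.reachable_of_reachable_map (ConnectedComponent.exact (congrArg Subtype.val hc))
      with hr | ⟨i, -, hr, -, -⟩
    · exact Subtype.ext (ConnectedComponent.sound hr)
    · exact absurd ⟨i, ConnectedComponent.sound hr.symm⟩ hc₁
  · rintro ⟨c', hc'⟩
    induction c' using ConnectedComponent.ind with | h x' => ?_
    obtain ⟨x, rfl⟩ := h.surjective x'
    refine ⟨⟨S.connectedComponentMk x, fun ⟨i, hi⟩ => hc' ⟨i, ?_⟩⟩, rfl⟩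
    exact ConnectedComponent.sound ((ConnectedComponent.exact hi).map_of_adj h.reachable_map)

/-- The marked components of `S'` are the classes of `S.markerSetoid m ⊔ ρ`, and the unmarked
ones correspond to those of `S`. -/
lemma card_connectedComponent_add [Finite V] :
    Nat.card S'.ConnectedComponent + Nat.card (Quotient (S.markerSetoid m)) =
      Nat.card S.ConnectedComponent + Nat.card (Quotient (S.markerSetoid m ⊔ ρ)) := by
  have : Finite V' := Finite.of_surjective q h.surjective
  rw [card_connectedComponent_eq S' (q ∘ m), card_connectedComponent_eq S m, h.markerSetoid_eq,
    h.numUnmarked_eq]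
  ring

end IsIdentification

noncomputable def connectedComponentSumEquiv (S : SimpleGraph V) (T : SimpleGraph W) :
    (S ⊕g T).ConnectedComponent ≃ S.ConnectedComponent ⊕ T.ConnectedComponent where
  toFun := Quot.lift (Sum.map S.connectedComponentMk T.connectedComponentMk) fun _ _ hr =>
    hr.rel_of_adj (Setoid.ker _).iseqv fun
      | .inl _, .inl _, hab =>
        congrArg Sum.inl (ConnectedComponent.sound (Adj.reachable (G := S) hab))
      | .inr _, .inr _, hab =>
        congrArg Sum.inr (ConnectedComponent.sound (Adj.reachable (G := T) hab))
  invFun := Sum.elim (ConnectedComponent.map Embedding.sumInl.toHom)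
    (ConnectedComponent.map Embedding.sumInr.toHom)
  left_inv c := by
    induction c using ConnectedComponent.ind with | h x => cases x <;> rfl
  right_inv c := by
    rcases c with c | c <;> induction c using ConnectedComponent.ind <;> rfl

lemma card_connectedComponent_sum [Finite V] [Finite W] (S : SimpleGraph V)
    (T : SimpleGraph W) : Nat.card (S ⊕g T).ConnectedComponent =
      Nat.card S.ConnectedComponent + Nat.card T.ConnectedComponent := by
  rw [Nat.card_congr (connectedComponentSumEquiv S T), Nat.card_sum]

lemma markerSetoid_sum (S : SimpleGraph V) (T : SimpleGraph W) (u : ι → V) (w : κ → W) :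
    (S ⊕g T).markerSetoid (Sum.map u w) =
      Setoid.ker (Sum.map (S.connectedComponentMk ∘ u) (T.connectedComponentMk ∘ w)) := by
  ext i j
  rw [markerSetoid, Setoid.ker_def, Setoid.ker_def,
    ← (connectedComponentSumEquiv S T).injective.eq_iff]
  cases i <;> cases j <;> rfl

end SimpleGraph

namespace Multigraph

open SimpleGraph

section Basic

variable (G : Multigraph)

lemma spanning_adj {A : Finset G.E} {a b : G.V} :
    (G.spanning A).Adj a b ↔ a ≠ b ∧ ∃ e ∈ A, G.ends e = s(a, b) := by
  rw [spanning, fromRel_adj]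
  refine and_congr_right fun _ => ⟨?_, .inl⟩
  rintro (h | ⟨e, he, hee⟩)
  exacts [h, ⟨e, he, hee.trans Sym2.eq_swap⟩]

lemma spanning_mono {A B : Finset G.E} (h : A ⊆ B) : G.spanning A ≤ G.spanning B := by
  intro a b hab
  rw [spanning_adj] at hab ⊢
  obtain ⟨hne, e, he, hee⟩ := hab
  exact ⟨hne, e, h he, hee⟩

lemma comps_empty : G.comps ∅ = Fintype.card G.V := by
  have hbot : G.spanning ∅ = ⊥ := by
    ext
    simp [spanning_adj]
  rw [comps, hbot, ← Nat.card_eq_fintype_card]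
  exact Nat.card_congr (Equiv.ofBijective _
    ⟨fun a b h => reachable_bot.1 (ConnectedComponent.exact h), Quot.mk_surjective⟩).symm

lemma comps_le_card (A : Finset G.E) : G.comps A ≤ Fintype.card G.V := by
  rw [comps, ← Nat.card_eq_fintype_card]
  exact Nat.card_le_card_of_surjective _ Quot.mk_surjective

lemma comps_anti {A B : Finset G.E} (h : A ⊆ B) : G.comps B ≤ G.comps A :=
  ConnectedComponent.card_le_card_of_le (G.spanning_mono h)

lemma card_le_card_add_comps (A : Finset G.E) : Fintype.card G.V ≤ A.card + G.comps A := by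
  classical
  induction A using Finset.induction_on with
  | empty => simp [comps_empty]
  | @insert e A he ih =>
    obtain ⟨a, b, hab⟩ : ∃ a b, G.ends e = s(a, b) := Sym2.exists.1 ⟨_, rfl⟩
    have hle : G.spanning (insert e A) ≤ G.spanning A ⊔ edge a b := by
      intro x y hxy
      rw [spanning_adj] at hxy
      obtain ⟨hne, e', he', hee'⟩ := hxy
      rcases Finset.mem_insert.1 he' with rfl | he'
      · rw [hab, Sym2.eq_iff] at hee'
        exact .inr ((edge_adj ..).2 ⟨by tauto, hne⟩)
      · exact .inl (G.spanning_adj.2 ⟨hne, e', he', hee'⟩)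
    have := card_connectedComponent_le_card_sup_edge_add_one (G.spanning A) a b
    have := ConnectedComponent.card_le_card_of_le hle
    rw [Finset.card_insert_of_notMem he]
    unfold comps at *
    omega

lemma comps_univ_eq_one (hG : G.Connected) : G.comps Finset.univ = 1 :=
  Nat.card_eq_one_iff_unique.2 ⟨hG.preconnected.subsingleton_connectedComponent,
    ⟨(G.spanning _).connectedComponentMk hG.nonempty.some⟩⟩

end Basic

section Identify

variable (G : Multigraph) {ι : Type*}

lemma reachable_identify_of_adj (r : G.V → G.V → Prop) (A : Finset G.E) (a b : G.V)
    (h : (G.spanning A).Adj a b) :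
    ((G.identify r).spanning A).Reachable (Quotient.mk _ a) (Quotient.mk _ b) := by
  obtain ⟨-, e, he, hee⟩ := G.spanning_adj.1 h
  by_cases hq : (Quotient.mk _ a : (G.identify r).V) = Quotient.mk _ b
  · exact hq ▸ .rfl
  · refine Adj.reachable ((spanning_adj _).2 ⟨hq, e, he, ?_⟩)
    change (G.ends e).map _ = _
    rw [hee, Sym2.map_mk]
    rfl

lemma connected_identify (hG : G.Connected) (r : G.V → G.V → Prop) : (G.identify r).Connected :=
  hG.of_reachable_map Quot.mk_surjective (G.reachable_identify_of_adj r Finset.univ)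

lemma isIdentification_identify (r : G.V → G.V → Prop) (A : Finset G.E) (m : ι → G.V)
    (ρ : Setoid ι) (hr : ∀ a b, r a b → ∃ i j, ρ i j ∧ a = m i ∧ b = m j)
    (hρ : ∀ i j, ρ i j → Relation.EqvGen r (m i) (m j)) :
    (G.spanning A).IsIdentification ((G.identify r).spanning A) (Quotient.mk _) m ρ where
  surjective := Quot.mk_surjective
  reachable_map := G.reachable_identify_of_adj r A
  exists_adj_of_adj x y hxy := by
    obtain ⟨hne, e, he, hee⟩ := (spanning_adj _).1 hxy
    obtain ⟨c, d, hcd⟩ : ∃ c d, G.ends e = s(c, d) := Sym2.exists.1 ⟨_, rfl⟩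
    change (G.ends e).map _ = _ at hee
    rw [hcd, Sym2.map_mk] at hee
    replace hee := Sym2.eq_iff.1 hee
    have hcd' : (G.spanning A).Adj c d :=
      G.spanning_adj.2 ⟨fun h => hne (by rcases hee with ⟨rfl, rfl⟩ | ⟨rfl, rfl⟩ <;> rw [h]), e,
        he, hcd⟩
    rcases hee with ⟨rfl, rfl⟩ | ⟨rfl, rfl⟩
    exacts [⟨c, d, rfl, rfl, hcd'⟩, ⟨d, c, rfl, rfl, hcd'.symm⟩]
  map_eq i j h := Quotient.sound (hρ i j h)
  eqvGen_of_map_eq a b h := (Quotient.exact h).mono hr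

/-- The graph `G(P)`, for the partition `P` of the markers given by `s`. -/
noncomputable def identifyAlong (u : ι → G.V) (s : Setoid ι) : Multigraph :=
  G.identify fun a b => ∃ i j, s.r i j ∧ a = u i ∧ b = u j

lemma comps_identifyAlong_add (u : ι → G.V) (s : Setoid ι) (A : Finset G.E) :
    (G.identifyAlong u s).comps A + Nat.card (Quotient ((G.spanning A).markerSetoid u)) =
      G.comps A + Nat.card (Quotient ((G.spanning A).markerSetoid u ⊔ s)) :=
  (G.isIdentification_identify _ A u s (fun _ _ h => h)
    fun i j h => .rel _ _ ⟨i, j, h, rfl, rfl⟩).card_connectedComponent_add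

lemma comps_identifyAlong_univ (hG : G.Connected) (u : ι → G.V) (s : Setoid ι) :
    (G.identifyAlong u s).comps Finset.univ = 1 :=
  comps_univ_eq_one _ (G.connected_identify hG _)

end Identify

section Glue

variable (G W : Multigraph)

lemma spanning_disjUnion (B : Finset G.E) (C : Finset W.E) :
    (G.disjUnion W).spanning (B.disjSum C) = G.spanning B ⊕g W.spanning C := by
  have hinj : ∀ {α : Type} {f : α → G.V ⊕ W.V}, f.Injective → ∀ (z : Sym2 α) (a b : α),
      z.map f = s(f a, f b) ↔ z = s(a, b) := fun hf z a b => by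
    rw [← Sym2.map_mk, (Sym2.map.injective hf).eq_iff]
  have hl : ∀ (z : Sym2 G.V) (b : W.V) (y : G.V ⊕ W.V),
      z.map Sum.inl ≠ s(.inr b, y) ∧ z.map Sum.inl ≠ s(y, .inr b) :=
    fun z b y => by induction z using Sym2.ind; simp
  have hr : ∀ (z : Sym2 W.V) (a : G.V) (y : G.V ⊕ W.V),
      z.map Sum.inr ≠ s(.inl a, y) ∧ z.map Sum.inr ≠ s(y, .inl a) :=
    fun z a y => by induction z using Sym2.ind; simp
  ext (a | a) (b | b) <;>
    simp [spanning_adj, disjUnion, hinj Sum.inl_injective, hinj Sum.inr_injective, hl, hr]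

variable {k : ℕ} (u : Fin k → G.V) (w : Fin k → W.V)

lemma comps_glue (B : Finset G.E) (C : Finset W.E) :
    (G.glue W u w).comps (B.disjSum C) =
      (G.identifyAlong u ((W.spanning C).markerSetoid w)).comps B +
        (W.spanning C).numUnmarked w := by
  have hglue : (G.spanning B ⊕g W.spanning C).IsIdentification
      ((G.glue W u w).spanning (B.disjSum C)) (G.glueMk W u w) (Sum.map u w)
      (Setoid.ker (Sum.elim id id)) := by
    rw [← spanning_disjUnion]
    refine (G.disjUnion W).isIdentification_identify _ _ _ _ ?_ ?_
    · rintro _ _ ⟨i, rfl, rfl⟩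
      exact ⟨.inl i, .inr i, rfl, rfl, rfl⟩
    · rintro (i | i) (j | j) (h : i = j) <;> subst h
      exacts [.refl _, .rel _ _ ⟨i, rfl, rfl⟩, .symm _ _ (.rel _ _ ⟨i, rfl, rfl⟩), .refl _]
  have h₁ := hglue.card_connectedComponent_add
  rw [markerSetoid_sum, card_connectedComponent_sum, Setoid.card_quotient_ker_sumMap,
    Setoid.ker_sumMap_sup_ker_sumElim,
    Setoid.card_quotient_comap_of_surjective _ fun i => ⟨Sum.inl i, rfl⟩, ← markerSetoid,
    ← markerSetoid] at h₁
  have h₂ := G.comps_identifyAlong_add u ((W.spanning C).markerSetoid w) B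
  have h₃ := card_connectedComponent_eq (W.spanning C) w
  unfold comps at *
  omega

lemma comps_glue_univ : (G.glue W u w).comps Finset.univ =
    (G.identifyAlong u ((W.spanning Finset.univ).markerSetoid w)).comps Finset.univ +
      (W.spanning Finset.univ).numUnmarked w :=
  G.comps_glue W u w _ _

lemma card_glue : Fintype.card (G.glue W u w).V =
    Fintype.card (G.identifyAlong u ((W.spanning ∅).markerSetoid w)).V +
      (W.spanning ∅).numUnmarked w := by
  rw [← comps_empty, ← comps_empty]
  exact G.comps_glue W u w ∅ ∅

end Glue

section Potts

variable (P Q : Multigraph)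

/-- The Fortuin–Kasteleyn form `∑_A q ^ c(A) v ^ |A|` of the Tutte polynomial, at
`q = (x - 1) (y - 1)` and `v = y - 1`. -/
noncomputable def pottsPoly : MvPolynomial (Fin 2) ℤ :=
  ∑ A : Finset P.E, (X 0 - 1) ^ P.comps A * (X 1 - 1) ^ (A.card + P.comps A)

lemma tutte_mul_eq_pottsPoly : P.tutte * ((X 0 - 1) ^ P.comps Finset.univ *
    (X 1 - 1) ^ Fintype.card P.V) = P.pottsPoly := by
  rw [tutte, pottsPoly, Finset.sum_mul]
  refine Finset.sum_congr rfl fun A _ => ?_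
  have h₁ := P.comps_le_card A
  have h₂ := P.comps_anti (Finset.subset_univ A)
  have h₃ := P.card_le_card_add_comps A
  rw [mul_mul_mul_comm, ← pow_add, ← pow_add, rk, rk]
  congr 2 <;> omega

lemma rk_univ_eq_of_tutte_eq (h : P.tutte = Q.tutte) : P.rk Finset.univ = Q.rk Finset.univ := by
  -- at `x = X + 1`, `y = 2` the Tutte polynomial becomes `∑_A X ^ (r(E) - r(A))`, of degree `r(E)`
  let φ : MvPolynomial (Fin 2) ℤ →ₐ[ℤ] Polynomial ℤ := aeval ![Polynomial.X + 1, 2]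
  suffices key : ∀ R : Multigraph, (φ R.tutte).natDegree = R.rk Finset.univ by
    rw [← key P, ← key Q, h]
  intro R
  have himg : φ R.tutte = ∑ A : Finset R.E, Polynomial.X ^ (R.rk Finset.univ - R.rk A) := by
    simp [φ, tutte, map_sum, show (2 - 1 : Polynomial ℤ) = 1 by norm_num]
  have hcoeff : (φ R.tutte).coeff (R.rk Finset.univ) ≠ 0 := by
    have hrk : R.rk ∅ = 0 := by rw [rk, comps_empty, Nat.sub_self]
    rw [himg, Polynomial.finsetSum_coeff]
    simp only [Polynomial.coeff_X_pow, Finset.sum_boole, Nat.cast_ne_zero]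
    exact Finset.card_ne_zero.2 ⟨∅, by simp [hrk]⟩
  refine le_antisymm ?_ (Polynomial.le_natDegree_of_ne_zero hcoeff)
  rw [himg]
  exact Polynomial.natDegree_sum_le_of_forall_le _ _ fun A _ =>
    (Polynomial.natDegree_X_pow_le _).trans (Nat.sub_le _ _)

variable {P Q}

lemma card_eq_of_tutte_eq (hc : P.comps Finset.univ = Q.comps Finset.univ)
    (h : P.tutte = Q.tutte) : Fintype.card P.V = Fintype.card Q.V := by
  have := rk_univ_eq_of_tutte_eq P Q h
  have := P.comps_le_card Finset.univ
  have := Q.comps_le_card Finset.univ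
  unfold rk at *
  omega

lemma pottsPoly_eq_of_tutte_eq (hc : P.comps Finset.univ = Q.comps Finset.univ)
    (h : P.tutte = Q.tutte) : P.pottsPoly = Q.pottsPoly := by
  rw [← tutte_mul_eq_pottsPoly, ← tutte_mul_eq_pottsPoly, h, hc, card_eq_of_tutte_eq hc h]

lemma tutte_eq_of_pottsPoly_eq (hc : P.comps Finset.univ = Q.comps Finset.univ)
    (hn : Fintype.card P.V = Fintype.card Q.V) (h : P.pottsPoly = Q.pottsPoly) :
    P.tutte = Q.tutte := by
  have hX : ∀ i, (X i - 1 : MvPolynomial (Fin 2) ℤ) ≠ 0 := fun i hi => by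
    simpa using congrArg (eval 0) hi
  refine mul_right_cancel₀ (mul_ne_zero (pow_ne_zero (P.comps Finset.univ) (hX 0))
    (pow_ne_zero (Fintype.card P.V) (hX 1))) ?_
  rw [tutte_mul_eq_pottsPoly, hc, hn, tutte_mul_eq_pottsPoly, h]

end Potts

section GluePotts

variable (G W : Multigraph) {k : ℕ} (u : Fin k → G.V) (w : Fin k → W.V)

lemma pottsPoly_glue : (G.glue W u w).pottsPoly = ∑ C : Finset W.E,
    (X 0 - 1) ^ (W.spanning C).numUnmarked w *
      (X 1 - 1) ^ (C.card + (W.spanning C).numUnmarked w) *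
        (G.identifyAlong u ((W.spanning C).markerSetoid w)).pottsPoly := by
  have hsplit : ∀ f : Finset (G.E ⊕ W.E) → MvPolynomial (Fin 2) ℤ,
      ∑ A, f A = ∑ C : Finset W.E, ∑ B : Finset G.E, f (B.disjSum C) := fun f => by
    rw [← Finset.sumEquiv.symm.toEquiv.sum_comp, Fintype.sum_prod_type, Finset.sum_comm]
    rfl
  refine (hsplit _).trans (Finset.sum_congr rfl fun C _ => ?_)
  set GC := G.identifyAlong u ((W.spanning C).markerSetoid w)
  have hGC : GC.pottsPoly =
      ∑ B : Finset G.E, (X 0 - 1) ^ GC.comps B * (X 1 - 1) ^ (B.card + GC.comps B) := rfl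
  rw [hGC, Finset.mul_sum]
  refine Finset.sum_congr rfl fun B _ => ?_
  erw [Finset.card_disjSum]
  rw [comps_glue]
  ring

end GluePotts

open Finset in
theorem tutte_glue_eq_of_tutte_identifyAlong_eq (G H W : Multigraph) {k : ℕ} (u : Fin k → G.V)
    (v : Fin k → H.V) (w : Fin k → W.V)
    (ht : ∀ s, (G.identifyAlong u s).tutte = (H.identifyAlong v s).tutte)
    (hc : ∀ s, (G.identifyAlong u s).comps univ = (H.identifyAlong v s).comps univ) :
    (G.glue W u w).tutte = (H.glue W v w).tutte := by
  have hz : (G.glue W u w).pottsPoly = (H.glue W v w).pottsPoly := by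
    rw [pottsPoly_glue, pottsPoly_glue]
    exact sum_congr rfl fun C _ => by rw [pottsPoly_eq_of_tutte_eq (hc _) (ht _)]
  refine tutte_eq_of_pottsPoly_eq ?_ ?_ hz
  · rw [comps_glue_univ, comps_glue_univ, hc]
  · rw [card_glue, card_glue, card_eq_of_tutte_eq (hc _) (ht _)]

end Multigraph

theorem stmt_8_general (G H W : Multigraph) {k : ℕ}
    (u : Fin k → G.V) (v : Fin k → H.V) (w : Fin k → W.V)
    (hG : G.Connected) (hH : H.Connected)
    (h : ∀ s : Setoid (Fin k),
      (G.identify (fun a b => ∃ i j : Fin k, s.r i j ∧ a = u i ∧ b = u j)).tutte =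
        (H.identify (fun a b => ∃ i j : Fin k, s.r i j ∧ a = v i ∧ b = v j)).tutte) :
    (G.glue W u w).tutte = (H.glue W v w).tutte :=
  G.tutte_glue_eq_of_tutte_identifyAlong_eq H W u v w h fun s => by
    rw [G.comps_identifyAlong_univ hG, H.comps_identifyAlong_univ hH]

/-- if `G(P)` and `H(P)` are T-equivalent for every partition `P`
of the index set (identifying the distinguished vertices along the blocks),
then the gluings of `G` and `H` to any graph `W` are T-equivalent. -/
theorem stmt_8 (G H W : Multigraph) {k : ℕ}
    (u : Fin k → G.V) (v : Fin k → H.V) (w : Fin k → W.V)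
    (hu : Function.Injective u) (hv : Function.Injective v) (hw : Function.Injective w)
    (hG : G.Connected) (hH : H.Connected)
    (h : ∀ s : Setoid (Fin k),
      (G.identify (fun a b => ∃ i j : Fin k, s.r i j ∧ a = u i ∧ b = u j)).tutte =
        (H.identify (fun a b => ∃ i j : Fin k, s.r i j ∧ a = v i ∧ b = v j)).tutte) :
    (G.glue W u w).tutte = (H.glue W v w).tutte :=
  stmt_8_general G H W u v w hG hH h
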